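/- Under the (δ, L, μ)-model assumption f(x) + ψ_k(y, x) + (μ/2)‖y − x‖² − δ₁^k ≤ f(y) ≤ f(x) + ψ_k(y, x) + (L/2)‖y − x‖² + δ₂^k for all x, y ∈ Q (with L ≥ μ ≥ 0, each ψ_k(·,x) convex, ψ_k(x,x)=0), the iterates x_{k+1} = argmin_{x∈Q}[ψ_k(x, x_k) + (L/2)‖x − x_k‖²] satisfy, with q = 1 − μ/L, the recursion (1/2)‖x_* − x_{k+1}‖² ≤ (1/L)(f(x_*) − f(x_{k+1}) + δ₁^k + δ₂^k) + (q/2)‖x_* − x_k‖², and hence after N steps (1/2)‖x_* − x_N‖² ≤ Σ_{i=1}^{N} (q^{N−i}/L)(f(x_*) − f(x_i) + δ₁^{i−1} + δ₂^{i−1}) + (q^N/2)‖x_* − x_0‖². -/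

import Mathlib

/-!
Adding `(L/2)‖· - x_k‖²` to the convex model `ψ_k(·, x_k)` makes it `L`-strongly convex, so its
minimiser `x_{k+1}` over `Q` satisfies the quadratic growth bound
`ψ_k(x_{k+1}) + (L/2)‖x_{k+1} - x_k‖² + (L/2)‖x_* - x_{k+1}‖² ≤ ψ_k(x_*) + (L/2)‖x_* - x_k‖²`.
The upper model bound at `x_{k+1}` and the lower one at `x_*` turn this into the one-step
recursion, and unrolling a linear recursion `a_{k+1} ≤ b_{k+1} + q a_k` with `q ≥ 0` gives the
`N`-step estimate.
-/

open Filter Topology Set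

section

variable {E : Type*} [NormedAddCommGroup E]

lemma StrongConvexOn.add_sq_norm_sub_le_of_isMinOn [NormedSpace ℝ E] {s : Set E} {m : ℝ}
    {f : E → ℝ} {u z : E} (hf : StrongConvexOn s m f) (hmin : IsMinOn f s u) (hu : u ∈ s)
    (hz : z ∈ s) : f u + m / 2 * ‖z - u‖ ^ 2 ≤ f z := by
  set C := m / 2 * ‖z - u‖ ^ 2
  have hsegment : ∀ t ∈ Ioo (0 : ℝ) 1, f u + (1 - t) * C ≤ f z := by
    rintro t ⟨ht0, ht1⟩
    have hconv := hf.2 hu hz (sub_nonneg.2 ht1.le) ht0.le (sub_add_cancel 1 t)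
    have hle : f u ≤ f ((1 - t) • u + t • z) :=
      hmin (hf.1 hu hz (sub_nonneg.2 ht1.le) ht0.le (sub_add_cancel 1 t))
    rw [norm_sub_rev, smul_eq_mul, smul_eq_mul] at hconv
    have : t * (f u + (1 - t) * C) ≤ t * f z := by linear_combination hle + hconv
    exact le_of_mul_le_mul_left this ht0
  have hlim : Tendsto (fun t : ℝ => f u + (1 - t) * C) (𝓝[>] 0) (𝓝 (f u + C)) := by
    have : Continuous fun t : ℝ => f u + (1 - t) * C := by fun_prop
    simpa using (this.tendsto 0).mono_left nhdsWithin_le_nhds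
  refine le_of_tendsto hlim ?_
  filter_upwards [Ioo_mem_nhdsGT one_pos] with t ht using hsegment t ht

variable [InnerProductSpace ℝ E]

lemma ConvexOn.strongConvexOn_add_sq_norm_sub {s : Set E} {g : E → ℝ} (hg : ConvexOn ℝ s g)
    (m : ℝ) (c : E) : StrongConvexOn s m fun x => g x + m / 2 * ‖x - c‖ ^ 2 := by
  rw [strongConvexOn_iff_convex]
  have hlin : ConvexOn ℝ s fun x => -m * inner ℝ c x := ((-m) • innerₛₗ ℝ c).convexOn hg.1
  refine ((hg.add hlin).add_const (m / 2 * ‖c‖ ^ 2)).congr fun x _ => ?_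
  simp only [Pi.add_apply]
  rw [norm_sub_sq_real, real_inner_comm]
  ring

/-- One step `x ↦ y` of the model method, with `φ = ψ_k(·, x)`, compared with any `z ∈ Q`. -/
theorem half_sq_norm_sub_le_of_isMinOn_model {Q : Set E} {f φ : E → ℝ} {x y z : E}
    {μ L δ₁ δ₂ : ℝ} (hL : 0 < L) (hφ : ConvexOn ℝ Q φ)
    (hy : IsMinOn (fun w => φ w + L / 2 * ‖w - x‖ ^ 2) Q y) (hyQ : y ∈ Q) (hzQ : z ∈ Q)
    (hup : f y ≤ f x + φ y + L / 2 * ‖y - x‖ ^ 2 + δ₂)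
    (hlow : f x + φ z + μ / 2 * ‖z - x‖ ^ 2 - δ₁ ≤ f z) :
    1 / 2 * ‖z - y‖ ^ 2 ≤ 1 / L * (f z - f y + δ₁ + δ₂) + (1 - μ / L) / 2 * ‖z - x‖ ^ 2 := by
  have hgrowth := (hφ.strongConvexOn_add_sq_norm_sub L x).add_sq_norm_sub_le_of_isMinOn hy hyQ hzQ
  have hstep : L / 2 * ‖z - y‖ ^ 2 ≤ f z - f y + δ₁ + δ₂ + (L - μ) / 2 * ‖z - x‖ ^ 2 := by
    linarith
  calc 1 / 2 * ‖z - y‖ ^ 2 = 1 / L * (L / 2 * ‖z - y‖ ^ 2) := by field_simp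
    _ ≤ 1 / L * (f z - f y + δ₁ + δ₂ + (L - μ) / 2 * ‖z - x‖ ^ 2) := by gcongr
    _ = 1 / L * (f z - f y + δ₁ + δ₂) + (1 - μ / L) / 2 * ‖z - x‖ ^ 2 := by field_simp

end

lemma le_sum_pow_mul_of_le_add_mul {a b : ℕ → ℝ} {q : ℝ} (hq : 0 ≤ q)
    (h : ∀ k, a (k + 1) ≤ b (k + 1) + q * a k) (N : ℕ) :
    a N ≤ ∑ i ∈ Finset.Icc 1 N, q ^ (N - i) * b i + q ^ N * a 0 := by
  induction N with
  | zero => simp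
  | succ N ih =>
    have hsum : ∑ i ∈ Finset.Icc 1 (N + 1), q ^ (N + 1 - i) * b i
        = b (N + 1) + q * ∑ i ∈ Finset.Icc 1 N, q ^ (N - i) * b i := by
      rw [Finset.sum_Icc_succ_top (by omega), Finset.mul_sum, Nat.sub_self, pow_zero, one_mul,
        add_comm]
      congr 1
      refine Finset.sum_congr rfl fun i hi => ?_
      rw [Nat.sub_add_comm (Finset.mem_Icc.1 hi).2, pow_succ]
      ring
    rw [hsum, pow_succ]
    linarith [h N, mul_le_mul_of_nonneg_left ih hq]

theorem gm_recursion_general (n : ℕ) (f : EuclideanSpace ℝ (Fin n) → ℝ)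
    (Q : Set (EuclideanSpace ℝ (Fin n)))
    (ψ : ℕ → EuclideanSpace ℝ (Fin n) → EuclideanSpace ℝ (Fin n) → ℝ)
    (δ₁ δ₂ : ℕ → ℝ) (μ L : ℝ) (hμL : μ ≤ L) (hL : 0 < L)
    (hψconv : ∀ k, ∀ x ∈ Q, ConvexOn ℝ Q (fun y => ψ k y x))
    (hlow : ∀ k, ∀ x ∈ Q, ∀ y ∈ Q,
      f x + ψ k y x + (μ / 2) * ‖y - x‖ ^ 2 - δ₁ k ≤ f y)
    (hup : ∀ k, ∀ x ∈ Q, ∀ y ∈ Q,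
      f y ≤ f x + ψ k y x + (L / 2) * ‖y - x‖ ^ 2 + δ₂ k)
    (x : ℕ → EuclideanSpace ℝ (Fin n)) (hx : ∀ k, x k ∈ Q)
    (hargmin : ∀ k, ∀ z ∈ Q,
      ψ k (x (k + 1)) (x k) + (L / 2) * ‖x (k + 1) - x k‖ ^ 2 ≤
      ψ k z (x k) + (L / 2) * ‖z - x k‖ ^ 2)
    (xstar : EuclideanSpace ℝ (Fin n)) (hxstar : xstar ∈ Q) :
    (∀ k : ℕ,
      (1 / 2) * ‖xstar - x (k + 1)‖ ^ 2 ≤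
        (1 / L) * (f xstar - f (x (k + 1)) + δ₁ k + δ₂ k)
          + ((1 - μ / L) / 2) * ‖xstar - x k‖ ^ 2) ∧
    (∀ N : ℕ, 1 ≤ N →
      (1 / 2) * ‖xstar - x N‖ ^ 2 ≤
        (∑ i ∈ Finset.Icc 1 N,
          ((1 - μ / L) ^ (N - i) / L) * (f xstar - f (x i) + δ₁ (i - 1) + δ₂ (i - 1)))
          + ((1 - μ / L) ^ N / 2) * ‖xstar - x 0‖ ^ 2) := by
  have step := fun k : ℕ =>
    half_sq_norm_sub_le_of_isMinOn_model hL (hψconv k (x k) (hx k)) (hargmin k) (hx (k + 1))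
      hxstar (hup k _ (hx k) _ (hx (k + 1))) (hlow k _ (hx k) _ hxstar)
  refine ⟨step, fun N _ => ?_⟩
  have hq : 0 ≤ 1 - μ / L := sub_nonneg.2 ((div_le_one hL).2 hμL)
  refine (le_sum_pow_mul_of_le_add_mul (a := fun k => 1 / 2 * ‖xstar - x k‖ ^ 2)
    (b := fun i => 1 / L * (f xstar - f (x i) + δ₁ (i - 1) + δ₂ (i - 1))) hq
    (fun k => by simp only [Nat.add_sub_cancel]; linarith [step k]) N).trans_eq ?_
  congr 1
  · exact Finset.sum_congr rfl fun i _ => by ring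
  · ring

theorem gm_recursion (n : ℕ) (f : EuclideanSpace ℝ (Fin n) → ℝ)
    (Q : Set (EuclideanSpace ℝ (Fin n))) (hQconv : Convex ℝ Q) (hQclosed : IsClosed Q)
    (ψ : ℕ → EuclideanSpace ℝ (Fin n) → EuclideanSpace ℝ (Fin n) → ℝ)
    (δ₁ δ₂ : ℕ → ℝ) (μ L : ℝ) (hμ : 0 ≤ μ) (hμL : μ ≤ L) (hL : 0 < L)
    (hψconv : ∀ k, ∀ x ∈ Q, ConvexOn ℝ Q (fun y => ψ k y x))
    (hψ0 : ∀ k, ∀ x ∈ Q, ψ k x x = 0)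
    (hlow : ∀ k, ∀ x ∈ Q, ∀ y ∈ Q,
      f x + ψ k y x + (μ / 2) * ‖y - x‖ ^ 2 - δ₁ k ≤ f y)
    (hup : ∀ k, ∀ x ∈ Q, ∀ y ∈ Q,
      f y ≤ f x + ψ k y x + (L / 2) * ‖y - x‖ ^ 2 + δ₂ k)
    (x : ℕ → EuclideanSpace ℝ (Fin n)) (hx : ∀ k, x k ∈ Q)
    (hargmin : ∀ k, ∀ z ∈ Q,
      ψ k (x (k + 1)) (x k) + (L / 2) * ‖x (k + 1) - x k‖ ^ 2 ≤
      ψ k z (x k) + (L / 2) * ‖z - x k‖ ^ 2)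
    (xstar : EuclideanSpace ℝ (Fin n)) (hxstar : xstar ∈ Q)
    (hmin : ∀ z ∈ Q, f xstar ≤ f z) :
    (∀ k : ℕ,
      (1 / 2) * ‖xstar - x (k + 1)‖ ^ 2 ≤
        (1 / L) * (f xstar - f (x (k + 1)) + δ₁ k + δ₂ k)
          + ((1 - μ / L) / 2) * ‖xstar - x k‖ ^ 2) ∧
    (∀ N : ℕ, 1 ≤ N →
      (1 / 2) * ‖xstar - x N‖ ^ 2 ≤
        (∑ i ∈ Finset.Icc 1 N,
          ((1 - μ / L) ^ (N - i) / L) * (f xstar - f (x i) + δ₁ (i - 1) + δ₂ (i - 1)))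
          + ((1 - μ / L) ^ N / 2) * ‖xstar - x 0‖ ^ 2) :=
  gm_recursion_general n f Q ψ δ₁ δ₂ μ L hμL hL hψconv hlow hup x hx hargmin xstar hxstar
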